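/- Let A be a band operator with band width Γ₀ and (v_n) an inflating sequence for 𝒴. Then for each n, R_{v_n} P_{Y_n} A P_{Y_n} R_{v_n}⁻¹ is a band operator with band width Γ₀, and the strong sum Op((P_{Y_n} A P_{Y_n})) = Σ_n R_{v_n} P_{Y_n} A P_{Y_n} R_{v_n}⁻¹ is a band operator with band width Γ₀. -/

import Mathlib

open Filter Topology

/-- `A` has band width `Γ₀`: the matrix kernel `k_A(t,s) = (A δ_s)(t)` vanishes
unless `t s⁻¹ ∈ Γ₀`. -/
def HasBandWidth {Γ : Type*} [Group Γ] [Countable Γ] [DecidableEq Γ]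
    (A : lp (fun _ : Γ => ℂ) 2 →L[ℂ] lp (fun _ : Γ => ℂ) 2) (Γ₀ : Finset Γ) : Prop :=
  ∀ t s : Γ, t * s⁻¹ ∉ Γ₀ → A (lp.single 2 s (1 : ℂ)) t = 0

/-!
Right translations preserve `t s⁻¹`, and compressing by the diagonal projections `P_{Y_n}` can
only kill matrix entries, so every finite section `R_{v_n} P_{Y_n} A P_{Y_n} R_{v_n}⁻¹` keeps the
band width of `A`. Its range consists of vectors supported in `Y_n v_n⁻¹`, and its norm on `u` is
at most `‖A‖` times the `ℓ²`-norm of `u` on `Y_n v_n⁻¹`. As these sets are pairwise disjoint, the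
sections applied to `u` are mutually orthogonal with square-summable norms, so the series
converges; Banach–Steinhaus makes the sum a bounded operator, and matrix entries, being
continuous functionals, pass to the limit.
-/

open Function

namespace lp

variable {ι : Type*}

theorem norm_sq_eq_tsum {E : ι → Type*} [∀ i, NormedAddCommGroup (E i)] (f : lp E 2) :
    ‖f‖ ^ 2 = ∑' i, ‖f i‖ ^ 2 := by
  simpa using lp.norm_rpow_eq_tsum (p := 2) (by norm_num) f

theorem summable_norm_sq {E : ι → Type*} [∀ i, NormedAddCommGroup (E i)] (f : lp E 2) :
    Summable fun i => ‖f i‖ ^ 2 := by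
  simpa using (lp.memℓp f).summable (p := 2) (by norm_num)

theorem norm_sq_eq_sum_of_support_subset {E : ι → Type*} [∀ i, NormedAddCommGroup (E i)]
    (f : lp E 2) {s : Finset ι} (hf : ∀ i ∉ s, f i = 0) : ‖f‖ ^ 2 = ∑ i ∈ s, ‖f i‖ ^ 2 := by
  rw [norm_sq_eq_tsum, tsum_eq_sum]
  intro i hi
  simp [hf i hi]

theorem norm_eq_of_apply_eq_apply_equiv {F : Type*} [NormedAddCommGroup F]
    {u w : lp (fun _ : ι => F) 2} (e : ι ≃ ι) (h : ∀ i, w i = u (e i)) : ‖w‖ = ‖u‖ := by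
  refine (pow_left_inj₀ (norm_nonneg _) (norm_nonneg _) two_ne_zero).1 ?_
  rw [norm_sq_eq_tsum, norm_sq_eq_tsum]
  simp only [h]
  exact e.tsum_eq fun i => ‖u i‖ ^ 2

theorem summable_of_pairwise_disjoint_support {𝕜 : Type*} [RCLike 𝕜] {G : ι → Type*}
    [∀ i, NormedAddCommGroup (G i)] [∀ i, InnerProductSpace 𝕜 (G i)] [∀ i, CompleteSpace (G i)]
    {κ : Type*} {f : κ → lp G 2} {s : κ → Set ι} (hs : Pairwise (Disjoint on s))
    (hf : ∀ k, ∀ i ∉ s k, f k i = 0) (h : Summable fun k => ‖f k‖ ^ 2) : Summable f := by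
  let K : κ → Submodule 𝕜 (lp G 2) := fun k => ⨅ i ∈ (s k)ᶜ, LinearMap.ker (lp.evalₗ G 2 i)
  have hK : ∀ k g, g ∈ K k ↔ ∀ i ∉ s k, g i = 0 := by
    intro k g
    simp [K, Submodule.mem_iInf]
  have horth : OrthogonalFamily 𝕜 (fun k => K k) fun k => (K k).subtypeₗᵢ := by
    refine orthogonalFamily_iff_pairwise.2 fun k l hkl => Submodule.isOrtho_iff_inner_eq.2 ?_
    intro a ha b hb
    have hpt : ∀ i, inner 𝕜 (a i) (b i) = 0 := fun i => by
      by_cases hi : i ∈ s k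
      · rw [(hK l b).1 hb i (Set.disjoint_left.1 (hs hkl) hi), inner_zero_right]
      · rw [(hK k a).1 ha i hi, inner_zero_left]
    simp only [lp.inner_eq_tsum, hpt, tsum_zero]
  simpa using (horth.summable_iff_norm_sq_summable fun k => ⟨f k, (hK k _).2 (hf k)⟩).2 h

end lp

theorem Summable.sum_finset_of_pairwise_disjoint {ι κ : Type*} {g : ι → ℝ} (hg : Summable g)
    (hg0 : ∀ i, 0 ≤ g i) {t : κ → Finset ι} (ht : Pairwise (Disjoint on t)) :
    Summable fun k => ∑ i ∈ t k, g i := by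
  classical
  refine summable_of_sum_le (c := ∑' i, g i) (fun k => Finset.sum_nonneg fun i _ => hg0 i)
    fun u => ?_
  rw [← Finset.sum_biUnion (ht.set_pairwise _)]
  exact hg.sum_le_tsum _ fun i _ => hg0 i

theorem ContinuousLinearMap.exists_hasSum_apply {𝕜 E F κ : Type*} [NontriviallyNormedField 𝕜]
    [NormedAddCommGroup E] [NormedSpace 𝕜 E] [CompleteSpace E] [NormedAddCommGroup F]
    [NormedSpace 𝕜 F] [Countable κ] (S : κ → E →L[𝕜] F) (h : ∀ u, Summable fun k => S k u) :
    ∃ T : E →L[𝕜] F, ∀ u, HasSum (fun k => S k u) (T u) := by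
  have hlim : Tendsto (fun (t : Finset κ) u => (∑ k ∈ t, S k) u) atTop
      (𝓝 fun u => ∑' k, S k u) := by
    refine tendsto_pi_nhds.2 fun u => ?_
    simp only [FunLike.coe_sum, Finset.sum_apply]
    exact (h u).hasSum
  exact ⟨continuousLinearMapOfTendsto _ hlim, fun u => (h u).hasSum⟩

local notation "ℓ²(" Γ ")" => lp (fun _ : Γ => ℂ) 2

section Band

variable {Γ : Type*}

theorem map_single_of_apply_eq_indicator [DecidableEq Γ] {P : ℓ²(Γ) →L[ℂ] ℓ²(Γ)} {S : Set Γ}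
    (hP : ∀ u x, P u x = S.indicator (fun y => u y) x) (s : Γ) (a : ℂ) :
    P (lp.single 2 s a) = lp.single 2 s (S.indicator (fun _ => a) s) := by
  refine lp.ext (funext fun x => ?_)
  rw [hP]
  by_cases hx : x = s
  · subst hx
    by_cases hxS : x ∈ S <;> simp [hxS]
  · simp [hx]

variable [Group Γ]

theorem norm_apply_eq_of_apply_eq_mul_right {T : ℓ²(Γ) →L[ℂ] ℓ²(Γ)} {r : Γ}
    (hT : ∀ u x, T u x = u (x * r)) (u : ℓ²(Γ)) : ‖T u‖ = ‖u‖ :=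
  lp.norm_eq_of_apply_eq_apply_equiv (Equiv.mulRight r) (hT u)

theorem translate_indicator_apply_eq_zero {P R : ℓ²(Γ) →L[ℂ] ℓ²(Γ)} {S : Set Γ} {r : Γ}
    (hP : ∀ u x, P u x = S.indicator (fun y => u y) x) (hR : ∀ u x, R u x = u (x * r))
    (u : ℓ²(Γ)) {x : Γ} (hx : x ∉ (· * r⁻¹) '' S) : R (P u) x = 0 := by
  rw [hR, hP, Set.indicator_of_notMem]
  exact fun hxr => hx ⟨x * r, hxr, mul_inv_cancel_right x r⟩

variable [DecidableEq Γ]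

theorem map_single_of_apply_eq_mul_right {T : ℓ²(Γ) →L[ℂ] ℓ²(Γ)} {r : Γ}
    (hT : ∀ u x, T u x = u (x * r)) (s : Γ) (a : ℂ) :
    T (lp.single 2 s a) = lp.single 2 (s * r⁻¹) a := by
  refine lp.ext (funext fun x => ?_)
  rw [hT, lp.single_apply, lp.single_apply]
  simp [Pi.single_apply, eq_mul_inv_iff_mul_eq]

theorem norm_sq_indicator_translate_eq_sum {P R : ℓ²(Γ) →L[ℂ] ℓ²(Γ)} {Y : Finset Γ} {r : Γ}
    (hP : ∀ u x, P u x = (Y : Set Γ).indicator (fun y => u y) x)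
    (hR : ∀ u x, R u x = u (x * r)) (u : ℓ²(Γ)) :
    ‖P (R u)‖ ^ 2 = ∑ z ∈ Y.image (· * r), ‖u z‖ ^ 2 := by
  rw [Finset.sum_image fun _ _ _ _ => mul_right_cancel,
    lp.norm_sq_eq_sum_of_support_subset _ fun x hx => by
      rw [hP, Set.indicator_of_notMem (mt Finset.mem_coe.1 hx)]]
  refine Finset.sum_congr rfl fun x hx => ?_
  rw [hP, Set.indicator_of_mem (Finset.mem_coe.2 hx), hR]

theorem norm_sq_finiteSection_le {P R R' : ℓ²(Γ) →L[ℂ] ℓ²(Γ)} {Y : Finset Γ} {r : Γ}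
    (hP : ∀ u x, P u x = (Y : Set Γ).indicator (fun y => u y) x)
    (hR : ∀ u x, R u x = u (x * r)) (hR' : ∀ u x, R' u x = u (x * r⁻¹))
    (A : ℓ²(Γ) →L[ℂ] ℓ²(Γ)) (u : ℓ²(Γ)) :
    ‖(R.comp ((P.comp (A.comp P)).comp R')) u‖ ^ 2 ≤
      ‖A‖ ^ 2 * ∑ z ∈ Y.image (· * r⁻¹), ‖u z‖ ^ 2 := by
  rw [← norm_sq_indicator_translate_eq_sum hP hR', ← mul_pow]
  refine pow_le_pow_left₀ (norm_nonneg _) ?_ 2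
  calc ‖R (P (A (P (R' u))))‖ = ‖P (A (P (R' u)))‖ := norm_apply_eq_of_apply_eq_mul_right hR _
    _ ≤ ‖A (P (R' u))‖ := lp.norm_mono two_ne_zero fun x => by
        rw [hP]; exact norm_indicator_le_norm_self _ _
    _ ≤ ‖A‖ * ‖P (R' u)‖ := A.le_opNorm _

namespace HasBandWidth

variable [Countable Γ] {Γ₀ : Finset Γ} {B : ℓ²(Γ) →L[ℂ] ℓ²(Γ)}

theorem indicator_comp (hB : HasBandWidth B Γ₀) {P : ℓ²(Γ) →L[ℂ] ℓ²(Γ)} {S : Set Γ}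
    (hP : ∀ u x, P u x = S.indicator (fun y => u y) x) : HasBandWidth (P.comp B) Γ₀ :=
  fun t s h => by simp [hP, hB t s h]

theorem comp_indicator (hB : HasBandWidth B Γ₀) {P : ℓ²(Γ) →L[ℂ] ℓ²(Γ)} {S : Set Γ}
    (hP : ∀ u x, P u x = S.indicator (fun y => u y) x) : HasBandWidth (B.comp P) Γ₀ :=
  fun t s h => by
    rw [ContinuousLinearMap.comp_apply, map_single_of_apply_eq_indicator hP, ← mul_one
      (S.indicator _ s), ← smul_eq_mul, lp.single_smul, map_smul, lp.coeFn_smul, Pi.smul_apply,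
      hB t s h, smul_zero]

theorem translate_conj (hB : HasBandWidth B Γ₀) {R R' : ℓ²(Γ) →L[ℂ] ℓ²(Γ)} {r : Γ}
    (hR : ∀ u x, R u x = u (x * r)) (hR' : ∀ u x, R' u x = u (x * r⁻¹)) :
    HasBandWidth (R.comp (B.comp R')) Γ₀ :=
  fun t s h => by
    rw [ContinuousLinearMap.comp_apply, ContinuousLinearMap.comp_apply, hR,
      map_single_of_apply_eq_mul_right hR', inv_inv]
    exact hB _ _ (by rwa [show t * r * (s * r)⁻¹ = t * s⁻¹ by group])

theorem of_hasSum {κ : Type*} {S : κ → ℓ²(Γ) →L[ℂ] ℓ²(Γ)} {T : ℓ²(Γ) →L[ℂ] ℓ²(Γ)}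
    (hS : ∀ k, HasBandWidth (S k) Γ₀) (hT : ∀ u, HasSum (fun k => S k u) (T u)) :
    HasBandWidth T Γ₀ :=
  fun t s h => by
    have hcoord := (lp.evalCLM ℂ (fun _ : Γ => ℂ) 2 t).hasSum (hT (lp.single 2 s 1))
    simp only [lp.evalCLM, LinearMap.mkContinuous_apply, lp.evalₗ_apply, hS _ t s h] at hcoord
    exact hcoord.unique hasSum_zero

end HasBandWidth

end Band

theorem op_of_finite_sections_is_band_general
    {Γ : Type*} [Group Γ] [Countable Γ] [DecidableEq Γ]
    (Y : ℕ → Finset Γ)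
    (v : ℕ → Γ)
    (hinfl : ∀ m n, m ≠ n →
      Disjoint ((fun y => y * (v m)⁻¹) '' (Y m : Set Γ))
               ((fun y => y * (v n)⁻¹) '' (Y n : Set Γ)))
    (P : ℕ → (lp (fun _ : Γ => ℂ) 2 →L[ℂ] lp (fun _ : Γ => ℂ) 2))
    (hP : ∀ (n : ℕ) (u : lp (fun _ : Γ => ℂ) 2) (x : Γ),
      P n u x = ((Y n : Set Γ)).indicator (fun y => u y) x)
    (R : Γ → (lp (fun _ : Γ => ℂ) 2 →L[ℂ] lp (fun _ : Γ => ℂ) 2))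
    (hR : ∀ (r : Γ) (u : lp (fun _ : Γ => ℂ) 2) (x : Γ), R r u x = u (x * r))
    (A : lp (fun _ : Γ => ℂ) 2 →L[ℂ] lp (fun _ : Γ => ℂ) 2)
    (Γ₀ : Finset Γ) (hA : HasBandWidth A Γ₀) :
    (∀ n, HasBandWidth
      ((R (v n)).comp (((P n).comp (A.comp (P n))).comp (R ((v n)⁻¹)))) Γ₀) ∧
    ∃ T : lp (fun _ : Γ => ℂ) 2 →L[ℂ] lp (fun _ : Γ => ℂ) 2,
      (∀ u, HasSum
        (fun n => ((R (v n)).comp (((P n).comp (A.comp (P n))).comp (R ((v n)⁻¹)))) u)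
        (T u)) ∧
      HasBandWidth T Γ₀ := by
  have hband : ∀ n, HasBandWidth
      ((R (v n)).comp (((P n).comp (A.comp (P n))).comp (R ((v n)⁻¹)))) Γ₀ := fun n =>
    ((hA.comp_indicator (hP n)).indicator_comp (hP n)).translate_conj (hR _) (hR _)
  have himage_disjoint : Pairwise (Disjoint on fun n => (Y n).image (· * (v n)⁻¹)) :=
    fun m n hmn => by
      rw [Function.onFun, ← Finset.disjoint_coe, Finset.coe_image, Finset.coe_image]
      exact hinfl m n hmn
  have hsummable : ∀ u, Summable fun n =>
      ((R (v n)).comp (((P n).comp (A.comp (P n))).comp (R ((v n)⁻¹)))) u := fun u =>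
    lp.summable_of_pairwise_disjoint_support (𝕜 := ℂ) hinfl
      (fun n _ hx => translate_indicator_apply_eq_zero (hP n) (hR _) _ hx)
      (.of_nonneg_of_le (fun _ => sq_nonneg _)
        (fun n => norm_sq_finiteSection_le (hP n) (hR _) (hR _) A u)
        (((lp.summable_norm_sq u).sum_finset_of_pairwise_disjoint (fun _ => sq_nonneg _)
          himage_disjoint).mul_left _))
  obtain ⟨T, hT⟩ := ContinuousLinearMap.exists_hasSum_apply _ hsummable
  exact ⟨hband, T, hT, HasBandWidth.of_hasSum hband hT⟩

/-- If `A` is a band operator with band width `Γ₀` and `(v_n)` is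
an inflating sequence for `𝒴`, then each `R_{v_n} P_{Y_n} A P_{Y_n} R_{v_n}⁻¹`
is a band operator with band width `Γ₀`, and the strong sum
`Op((P_{Y_n} A P_{Y_n})) = Σ_n R_{v_n} P_{Y_n} A P_{Y_n} R_{v_n}⁻¹` is a band
operator with band width `Γ₀` as well. -/
theorem op_of_finite_sections_is_band
    {Γ : Type*} [Group Γ] [Countable Γ] [DecidableEq Γ]
    (Y : ℕ → Finset Γ) (hmono : Monotone Y)
    (hcup : ⋃ n, (Y n : Set Γ) = Set.univ)
    (v : ℕ → Γ)
    (hinfl : ∀ m n, m ≠ n →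
      Disjoint ((fun y => y * (v m)⁻¹) '' (Y m : Set Γ))
               ((fun y => y * (v n)⁻¹) '' (Y n : Set Γ)))
    (P : ℕ → (lp (fun _ : Γ => ℂ) 2 →L[ℂ] lp (fun _ : Γ => ℂ) 2))
    (hP : ∀ (n : ℕ) (u : lp (fun _ : Γ => ℂ) 2) (x : Γ),
      P n u x = ((Y n : Set Γ)).indicator (fun y => u y) x)
    (R : Γ → (lp (fun _ : Γ => ℂ) 2 →L[ℂ] lp (fun _ : Γ => ℂ) 2))
    (hR : ∀ (r : Γ) (u : lp (fun _ : Γ => ℂ) 2) (x : Γ), R r u x = u (x * r))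
    (A : lp (fun _ : Γ => ℂ) 2 →L[ℂ] lp (fun _ : Γ => ℂ) 2)
    (Γ₀ : Finset Γ) (hA : HasBandWidth A Γ₀) :
    (∀ n, HasBandWidth
      ((R (v n)).comp (((P n).comp (A.comp (P n))).comp (R ((v n)⁻¹)))) Γ₀) ∧
    ∃ T : lp (fun _ : Γ => ℂ) 2 →L[ℂ] lp (fun _ : Γ => ℂ) 2,
      (∀ u, HasSum
        (fun n => ((R (v n)).comp (((P n).comp (A.comp (P n))).comp (R ((v n)⁻¹)))) u)
        (T u)) ∧
      HasBandWidth T Γ₀ :=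
  op_of_finite_sections_is_band_general Y v hinfl P hP R hR A Γ₀ hA
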